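/- arXiv:2409.09757 — 4 statements merged into one kernel-verified Lean document; each statement's English description precedes it below -/
import Mathlib

section
/- Let M be a commutative monoid with zero. An ideal I of M is irreducible if and only if for all m, m' ∈ M, ⟨m⟩ ∩ ⟨m'⟩ ⊆ I implies m ∈ I or m' ∈ I, where ⟨m⟩ = {m*x : x ∈ M} is the ideal generated by m. -/
/-- An ideal of a commutative monoid: a nonempty subset `I` such that
`i ∈ I` and `m ∈ N` imply `i * m ∈ I`. -/
def IsIdeal {N : Type*} [CommMonoid N] (I : Set N) : Prop :=
  I.Nonempty ∧ ∀ i ∈ I, ∀ m : N, i * m ∈ I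

/-- The irreducibility condition on an ideal `L`: whenever `L = I ∩ J` for
ideals `I`, `J`, then `L = I` or `L = J`. -/
def IrredCond {N : Type*} [CommMonoid N] (L : Set N) : Prop :=
  ∀ I J : Set N, IsIdeal I → IsIdeal J → L = I ∩ J → L = I ∨ L = J

/-- The strong irreducibility condition on an ideal `L`: whenever
`I ∩ J ⊆ L` for ideals `I`, `J`, then `I ⊆ L` or `J ⊆ L`. -/
def StrIrredCond {N : Type*} [CommMonoid N] (L : Set N) : Prop :=
  ∀ I J : Set N, IsIdeal I → IsIdeal J → I ∩ J ⊆ L → I ⊆ L ∨ J ⊆ L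

/-- The radical of a subset `I`: all elements some positive power of which
lies in `I`. -/
def radicalSet {N : Type*} [CommMonoid N] (I : Set N) : Set N :=
  {m : N | ∃ k : ℕ, 0 < k ∧ m ^ k ∈ I}

/-- A primary ideal: a proper ideal `I` such that `x * y ∈ I` implies
`x ∈ I` or `y ^ k ∈ I` for some positive integer `k`. -/
def IsPrimaryIdeal {N : Type*} [CommMonoid N] (I : Set N) : Prop :=
  IsIdeal I ∧ I ≠ Set.univ ∧
    ∀ x y : N, x * y ∈ I → x ∈ I ∨ ∃ k : ℕ, 0 < k ∧ y ^ k ∈ I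

section

variable {N : Type*} [CommMonoid N] {I J L : Set N}

def principalIdeal (m : N) : Set N := {x | ∃ y, x = m * y}

theorem mem_principalIdeal_self (m : N) : m ∈ principalIdeal m := ⟨1, (mul_one m).symm⟩

theorem isIdeal_principalIdeal (m : N) : IsIdeal (principalIdeal m) :=
  ⟨⟨m, mem_principalIdeal_self m⟩, by rintro _ ⟨y, rfl⟩ n; exact ⟨y * n, mul_assoc m y n⟩⟩

theorem IsIdeal.principalIdeal_subset (hI : IsIdeal I) {m : N} (hm : m ∈ I) :
    principalIdeal m ⊆ I := by
  rintro _ ⟨y, rfl⟩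
  exact hI.2 m hm y

theorem IsIdeal.union (hI : IsIdeal I) (hJ : IsIdeal J) : IsIdeal (I ∪ J) := by
  refine ⟨hI.1.mono Set.subset_union_left, ?_⟩
  rintro i (hi | hi) m
  exacts [Or.inl (hI.2 i hi m), Or.inr (hJ.2 i hi m)]

/-- Unlike for ideals of a ring, a union of monoid ideals is an ideal, so `I ∩ J ⊆ L` gives the
decomposition `L = (L ∪ I) ∩ (L ∪ J)` into ideals. -/
theorem IrredCond.strIrredCond (hL : IsIdeal L) (h : IrredCond L) : StrIrredCond L := by
  intro I J hI hJ hIJ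
  have hdecomp : L = (L ∪ I) ∩ (L ∪ J) := by
    rw [← Set.union_inter_distrib_left, Set.union_eq_self_of_subset_right hIJ]
  rcases h _ _ (hL.union hI) (hL.union hJ) hdecomp with hLI | hLJ
  · exact Or.inl (Set.union_eq_left.mp hLI.symm)
  · exact Or.inr (Set.union_eq_left.mp hLJ.symm)

theorem StrIrredCond.irredCond (h : StrIrredCond L) : IrredCond L := by
  intro I J hI hJ hLIJ
  rcases h I J hI hJ hLIJ.ge with hIL | hJL
  · exact Or.inl (hLIJ.le.trans Set.inter_subset_left |>.antisymm hIL)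
  · exact Or.inr (hLIJ.le.trans Set.inter_subset_right |>.antisymm hJL)

theorem irredCond_iff_strIrredCond (hL : IsIdeal L) : IrredCond L ↔ StrIrredCond L :=
  ⟨IrredCond.strIrredCond hL, StrIrredCond.irredCond⟩

theorem strIrredCond_iff_principalIdeal :
    StrIrredCond L ↔
      ∀ m m' : N, principalIdeal m ∩ principalIdeal m' ⊆ L → m ∈ L ∨ m' ∈ L := by
  refine ⟨fun h m m' hsub => ?_, fun h I J hI hJ hIJ => ?_⟩
  · exact (h _ _ (isIdeal_principalIdeal m) (isIdeal_principalIdeal m') hsub).imp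
      (· (mem_principalIdeal_self m)) (· (mem_principalIdeal_self m'))
  · by_contra! hnot
    obtain ⟨⟨a, haI, haL⟩, ⟨b, hbJ, hbL⟩⟩ := And.imp Set.not_subset.mp Set.not_subset.mp hnot
    have hab : principalIdeal a ∩ principalIdeal b ⊆ L :=
      (Set.inter_subset_inter (hI.principalIdeal_subset haI)
        (hJ.principalIdeal_subset hbJ)).trans hIJ
    exact (h a b hab).elim haL hbL

end

/-- An ideal `I` of a commutative monoid with zero is irreducible iff
`⟨m⟩ ∩ ⟨m'⟩ ⊆ I` implies `m ∈ I` or `m' ∈ I`, for all `m, m' ∈ M`, where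
`⟨m⟩ = {m * x : x ∈ M}`. -/
theorem irreducible_iff_elementwise {M : Type*} [CommMonoidWithZero M]
    (I : Set M) (hI : IsIdeal I) :
    IrredCond I ↔
    (∀ m m' : M,
      {x : M | ∃ y : M, x = m * y} ∩ {x : M | ∃ y : M, x = m' * y} ⊆ I →
      m ∈ I ∨ m' ∈ I) :=
  (irredCond_iff_strIrredCond hI).trans strIrredCond_iff_principalIdeal
end

section
/- Let M be a commutative monoid with zero and P a proper ideal of M. Then P is prime if and only if P is both semiprime and irreducible. -/
/-!
A prime ideal contains every element one of whose positive powers it contains, and whenever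
`I ∩ J ⊆ P` with `i ∈ I \ P`, `j ∈ J \ P`, the product `i * j ∈ I ∩ J` contradicts primality.
Conversely, if `x * y ∈ P` then `(P ∪ xM) ∩ (P ∪ yM) = P`: a common element `x * m = y * n`
has square `(x * y) * (m * n) ∈ P`, so lies in `P` by semiprimality. Irreducibility then
forces `P = P ∪ xM` or `P = P ∪ yM`, that is `x ∈ P` or `y ∈ P`.
-/

section CommMonoid

variable {N : Type*} [CommMonoid N]

theorem subset_radicalSet (I : Set N) : I ⊆ radicalSet I :=
  fun m hm => ⟨1, one_pos, by rwa [pow_one]⟩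

theorem mem_of_pow_mem_of_prime {P : Set N} (hprime : ∀ x y : N, x * y ∈ P → x ∈ P ∨ y ∈ P)
    {x : N} {k : ℕ} (hk : 0 < k) (hxk : x ^ k ∈ P) : x ∈ P := by
  induction k, hk using Nat.le_induction with
  | base => rwa [pow_one] at hxk
  | succ k _ ih =>
    rw [pow_succ] at hxk
    exact (hprime _ _ hxk).elim ih id

theorem radicalSet_eq_self_of_prime {P : Set N}
    (hprime : ∀ x y : N, x * y ∈ P → x ∈ P ∨ y ∈ P) : radicalSet P = P :=
  Set.Subset.antisymm (fun _ ⟨_, hk, hxk⟩ => mem_of_pow_mem_of_prime hprime hk hxk)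
    (subset_radicalSet P)

theorem strIrredCond_of_prime {P : Set N} (hprime : ∀ x y : N, x * y ∈ P → x ∈ P ∨ y ∈ P) :
    StrIrredCond P := by
  intro I J hI hJ hIJ
  by_contra! h
  obtain ⟨⟨i, hiI, hiP⟩, ⟨j, hjJ, hjP⟩⟩ := And.imp Set.not_subset.mp Set.not_subset.mp h
  have hij : i * j ∈ I ∩ J := ⟨hI.2 i hiI j, mul_comm j i ▸ hJ.2 j hjJ i⟩
  exact (hprime i j (hIJ hij)).elim hiP hjP

theorem StrIrredCond.irredCond_s7 {L : Set N} (hL : StrIrredCond L) : IrredCond L := by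
  intro I J hI hJ hLIJ
  have hLI : L ⊆ I := hLIJ ▸ Set.inter_subset_left
  have hLJ : L ⊆ J := hLIJ ▸ Set.inter_subset_right
  exact (hL I J hI hJ hLIJ.ge).imp hLI.antisymm hLJ.antisymm

def adjoinElem (I : Set N) (x : N) : Set N :=
  I ∪ Set.range (x * ·)

theorem mem_adjoinElem_self (I : Set N) (x : N) : x ∈ adjoinElem I x :=
  Or.inr ⟨1, mul_one x⟩

theorem IsIdeal.adjoinElem {I : Set N} (hI : IsIdeal I) (x : N) : IsIdeal (adjoinElem I x) := by
  refine ⟨⟨x, mem_adjoinElem_self I x⟩, ?_⟩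
  rintro _ (hi | ⟨m, rfl⟩) n
  · exact Or.inl (hI.2 _ hi n)
  · exact Or.inr ⟨m * n, (mul_assoc x m n).symm⟩

theorem adjoinElem_inter_adjoinElem_eq_self {P : Set N} (hP : IsIdeal P)
    (hrad : radicalSet P ⊆ P) {x y : N} (hxy : x * y ∈ P) :
    adjoinElem P x ∩ adjoinElem P y = P := by
  refine Set.Subset.antisymm ?_ fun p hp => ⟨Or.inl hp, Or.inl hp⟩
  rintro z ⟨hzP | ⟨m, rfl⟩, hzP' | ⟨n, hn⟩⟩
  · exact hzP
  · exact hzP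
  · exact hzP'
  have hsq : (x * m) ^ 2 = (x * y) * (m * n) :=
    calc (x * m) ^ 2 = (x * m) * (y * n) := by rw [sq, ← show y * n = x * m from hn]
      _ = (x * y) * (m * n) := mul_mul_mul_comm x m y n
  exact hrad ⟨2, two_pos, hsq ▸ hP.2 _ hxy _⟩

theorem prime_of_radicalSet_subset_of_irredCond {P : Set N} (hP : IsIdeal P)
    (hrad : radicalSet P ⊆ P) (hirr : IrredCond P) :
    ∀ x y : N, x * y ∈ P → x ∈ P ∨ y ∈ P := by
  intro x y hxy
  refine (hirr _ _ (hP.adjoinElem x) (hP.adjoinElem y)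
    (adjoinElem_inter_adjoinElem_eq_self hP hrad hxy).symm).imp ?_ ?_
  · exact fun h => h ▸ mem_adjoinElem_self P x
  · exact fun h => h ▸ mem_adjoinElem_self P y

end CommMonoid

theorem prime_iff_semiprime_and_irreducible_general {M : Type*} [CommMonoidWithZero M]
    (P : Set M) (hP : IsIdeal P) :
    (∀ x y : M, x * y ∈ P → x ∈ P ∨ y ∈ P) ↔
    (radicalSet P = P ∧ IrredCond P) :=
  ⟨fun hprime => ⟨radicalSet_eq_self_of_prime hprime, (strIrredCond_of_prime hprime).irredCond_s7⟩,
    fun ⟨hrad, hirr⟩ => prime_of_radicalSet_subset_of_irredCond hP hrad.le hirr⟩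

/-- A proper ideal `P` of a commutative monoid with zero is prime iff it is
both semiprime and irreducible. -/
theorem prime_iff_semiprime_and_irreducible {M : Type*} [CommMonoidWithZero M]
    (P : Set M) (hP : IsIdeal P) (hproper : P ≠ Set.univ) :
    (∀ x y : M, x * y ∈ P → x ∈ P ∨ y ∈ P) ↔
    (radicalSet P = P ∧ IrredCond P) :=
  prime_iff_semiprime_and_irreducible_general P hP
end

section
/- Let M be a commutative monoid with zero, S a submonoid of M, and let M_S denote the localization of M at S. Let I be a strongly irreducible ideal of M such that I ∩ S = ∅ and such that I equals the contraction of its extension, i.e., I = {m ∈ M : mk(m,1) ∈ I_S} where I_S = {mk(i,s) : i ∈ I, s ∈ S}. Then I_S is a proper strongly irreducible ideal of M_S. -/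
/-!
An ideal `A` of `M_S` is recovered from its contraction `A^c = {m : mk m 1 ∈ A}` as the
extension `(A^c)_S`, since `mk m s ∈ A` forces `mk m 1 = mk m s * mk s 1 ∈ A`. Contraction
commutes with intersections, so `A ∩ B ⊆ I_S` gives `A^c ∩ B^c ⊆ (I_S)^c = I`; strong
irreducibility of `I` yields, say, `A^c ⊆ I`, and extending back gives `A ⊆ I_S`.
Properness: `I_S = M_S` would put `1` in `(I_S)^c = I`, which is disjoint from `S`.
-/

open Localization

namespace Localization

variable {M : Type*} [CommMonoid M] (S : Submonoid M)

theorem mk_mul_mk_self_one (m : M) (s : S) : mk m s * mk (s : M) 1 = mk m 1 := by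
  rw [← mul_one (mk m 1), ← mk_self s, mk_mul, mk_mul, mul_one, one_mul]

def extension (I : Set M) : Set (Localization S) :=
  {x | ∃ i ∈ I, ∃ s : S, x = mk i s}

def contraction (A : Set (Localization S)) : Set M :=
  {m | mk m 1 ∈ A}

variable {S}

theorem extension_mono {I J : Set M} (h : I ⊆ J) : extension S I ⊆ extension S J :=
  fun _ ⟨i, hi, s, hx⟩ => ⟨i, h hi, s, hx⟩

theorem contraction_mono {A B : Set (Localization S)} (h : A ⊆ B) :
    contraction S A ⊆ contraction S B :=
  fun _ hm => h hm

theorem contraction_inter (A B : Set (Localization S)) :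
    contraction S (A ∩ B) = contraction S A ∩ contraction S B :=
  rfl

end Localization

namespace IsIdeal

variable {M : Type*} [CommMonoid M] {S : Submonoid M}

theorem mk_one_mem {A : Set (Localization S)} (hA : IsIdeal A) {m : M} {s : S}
    (h : mk m s ∈ A) : mk m 1 ∈ A :=
  mk_mul_mk_self_one S m s ▸ hA.2 _ h _

variable (S) in
theorem extension {I : Set M} (hI : IsIdeal I) : IsIdeal (extension S I) := by
  obtain ⟨i, hi⟩ := hI.1
  refine ⟨⟨mk i 1, i, hi, 1, rfl⟩, ?_⟩
  rintro _ ⟨j, hj, s, rfl⟩ x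
  induction x using Localization.ind with
  | _ p => exact ⟨j * p.1, hI.2 j hj p.1, s * p.2, mk_mul _ _ _ _⟩

theorem contraction {A : Set (Localization S)} (hA : IsIdeal A) :
    IsIdeal (contraction S A) := by
  obtain ⟨x, hx⟩ := hA.1
  refine ⟨?_, fun m hm n => ?_⟩
  · induction x using Localization.ind with
    | _ p => exact ⟨p.1, hA.mk_one_mem hx⟩
  · have := hA.2 _ hm (mk n 1)
    rwa [mk_mul, one_mul] at this

theorem subset_extension_contraction {A : Set (Localization S)} (hA : IsIdeal A) :
    A ⊆ Localization.extension S (Localization.contraction S A) := by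
  intro x hx
  induction x using Localization.ind with
  | _ p => exact ⟨p.1, hA.mk_one_mem hx, p.2, rfl⟩

end IsIdeal

section

variable {M : Type*} [CommMonoid M] (S : Submonoid M) {I : Set M}

theorem Localization.extension_ne_univ (hcontr : contraction S (extension S I) ⊆ I)
    (hone : (1 : M) ∉ I) : extension S I ≠ Set.univ :=
  fun h => hone (hcontr (h ▸ Set.mem_univ _))

theorem StrIrredCond.extension (hstr : StrIrredCond I)
    (hcontr : contraction S (extension S I) ⊆ I) : StrIrredCond (extension S I) := by
  intro A B hA hB hAB
  have hAB' : contraction S A ∩ contraction S B ⊆ I :=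
    (contraction_inter A B ▸ contraction_mono hAB).trans hcontr
  exact (hstr _ _ hA.contraction hB.contraction hAB').imp
    (fun h => hA.subset_extension_contraction.trans (extension_mono h))
    (fun h => hB.subset_extension_contraction.trans (extension_mono h))

end

/-- If `I` is a strongly irreducible ideal of `M` disjoint from `S` that
equals the contraction of its extension, then its extension `I_S` is a
proper strongly irreducible ideal of the localization `M_S`. -/
theorem extension_strongly_irreducible {M : Type*} [CommMonoidWithZero M]
    (S : Submonoid M) (I : Set M) (hI : IsIdeal I) (hstr : StrIrredCond I)
    (hdisj : I ∩ (S : Set M) = ∅)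
    (hsat : I = {m : M |
      Localization.mk m 1 ∈ {x : Localization S | ∃ i ∈ I, ∃ s : S, x = Localization.mk i s}}) :
    IsIdeal {x : Localization S | ∃ i ∈ I, ∃ s : S, x = Localization.mk i s} ∧
    {x : Localization S | ∃ i ∈ I, ∃ s : S, x = Localization.mk i s} ≠ Set.univ ∧
    StrIrredCond {x : Localization S | ∃ i ∈ I, ∃ s : S, x = Localization.mk i s} := by
  have hcontr : contraction S (extension S I) ⊆ I := hsat.superset
  have hone : (1 : M) ∉ I := fun h => Set.eq_empty_iff_forall_notMem.mp hdisj 1 ⟨h, S.one_mem⟩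
  exact ⟨hI.extension S, extension_ne_univ S hcontr hone, hstr.extension S hcontr⟩
end

section
/- Let M be a commutative monoid with zero in which every primary ideal is strongly irreducible. Let I be a proper ideal of M admitting two minimal primary decompositions, i.e., two finite nonempty families 𝒫 and 𝒬 of primary ideals of M with I = ⋂ 𝒫 = ⋂ 𝒬, where minimality means that no member of the family contains the intersection of the remaining members. Then 𝒫 = 𝒬 as sets (in particular they have the same number of members). -/
/-!
Every `p ∈ P` contains `⋂ Q`, so by strong irreducibility (extended to finite intersections)
it contains some `q ∈ Q`; symmetrically `q` contains some `p' ∈ P`. Then `p' ⊆ p`, and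
minimality of `P` forces `p' = p`, whence `p = q ∈ Q`.
-/

lemma isIdeal_univ {N : Type*} [CommMonoid N] : IsIdeal (Set.univ : Set N) :=
  ⟨Set.univ_nonempty, fun _ _ _ => trivial⟩

lemma IsIdeal.inter {N : Type*} [CommMonoid N] {I J : Set N} (hI : IsIdeal I)
    (hJ : IsIdeal J) : IsIdeal (I ∩ J) := by
  obtain ⟨i, hi⟩ := hI.1
  obtain ⟨j, hj⟩ := hJ.1
  refine ⟨⟨i * j, hI.2 i hi j, mul_comm i j ▸ hJ.2 j hj i⟩, fun x hx m => ?_⟩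
  exact ⟨hI.2 x hx.1 m, hJ.2 x hx.2 m⟩

lemma isIdeal_biInter {N : Type*} [CommMonoid N] [DecidableEq (Set N)]
    (S : Finset (Set N)) (hS : ∀ s ∈ S, IsIdeal s) : IsIdeal (⋂ s ∈ S, s) := by
  induction S using Finset.induction with
  | empty => simpa using isIdeal_univ
  | insert a T _ ih =>
    rw [Finset.set_biInter_insert]
    exact (hS a (T.mem_insert_self a)).inter
      (ih fun s hs => hS s (Finset.mem_insert_of_mem hs))

lemma StrIrredCond.exists_subset_of_biInter_subset {N : Type*} [CommMonoid N]
    [DecidableEq (Set N)] {L : Set N} (hL : StrIrredCond L) (hL_ne : L ≠ Set.univ)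
    (S : Finset (Set N)) (hS : ∀ s ∈ S, IsIdeal s) (hsub : (⋂ s ∈ S, s) ⊆ L) :
    ∃ s ∈ S, s ⊆ L := by
  induction S using Finset.induction with
  | empty => exact absurd (Set.univ_subset_iff.mp (by simpa using hsub)) hL_ne
  | insert a T _ ih =>
    have hT : ∀ s ∈ T, IsIdeal s := fun s hs => hS s (Finset.mem_insert_of_mem hs)
    rw [Finset.set_biInter_insert] at hsub
    rcases hL a _ (hS a (T.mem_insert_self a)) (isIdeal_biInter T hT) hsub with ha | hTL
    · exact ⟨a, T.mem_insert_self a, ha⟩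
    · obtain ⟨s, hs, hsL⟩ := ih hT hTL
      exact ⟨s, Finset.mem_insert_of_mem hs, hsL⟩

def IsIrredundant {α : Type*} [DecidableEq (Set α)] (A : Finset (Set α)) : Prop :=
  ∀ p ∈ A, ¬ (⋂ q ∈ A.erase p, q) ⊆ p

lemma IsIrredundant.eq_of_subset {α : Type*} [DecidableEq (Set α)] {A : Finset (Set α)}
    (hA : IsIrredundant A) {p p' : Set α} (hp : p ∈ A) (hp' : p' ∈ A) (h : p' ⊆ p) :
    p' = p := by
  by_contra hne
  exact hA p hp ((Set.biInter_subset_of_mem (Finset.mem_erase.mpr ⟨hne, hp'⟩)).trans h)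

lemma subset_of_biInter_eq_of_isIrredundant {N : Type*} [CommMonoid N] [DecidableEq (Set N)]
    (hyp : ∀ P : Set N, IsPrimaryIdeal P → StrIrredCond P) {A B : Finset (Set N)}
    (hAprim : ∀ p ∈ A, IsPrimaryIdeal p) (hBprim : ∀ q ∈ B, IsPrimaryIdeal q)
    (hAB : (⋂ p ∈ A, p) = ⋂ q ∈ B, q) (hA : IsIrredundant A) : A ⊆ B := by
  have exists_subset : ∀ {C : Finset (Set N)} (p : Set N), IsPrimaryIdeal p →
      (∀ q ∈ C, IsPrimaryIdeal q) → (⋂ q ∈ C, q) ⊆ p → ∃ q ∈ C, q ⊆ p :=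
    fun p hp hC hsub => (hyp p hp).exists_subset_of_biInter_subset hp.2.1 _
      (fun q hq => (hC q hq).1) hsub
  intro p hp
  obtain ⟨q, hq, hqp⟩ := exists_subset p (hAprim p hp) hBprim
    (hAB ▸ Set.biInter_subset_of_mem hp)
  obtain ⟨p', hp', hp'q⟩ := exists_subset q (hBprim q hq) hAprim
    (hAB ▸ Set.biInter_subset_of_mem hq)
  obtain rfl : p' = p := hA.eq_of_subset hp hp' (hp'q.trans hqp)
  exact hp'q.antisymm hqp ▸ hq

open Classical in
theorem minimal_primary_decomposition_unique_general {M : Type*} [CommMonoidWithZero M]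
    (hyp : ∀ P : Set M, IsPrimaryIdeal P → StrIrredCond P)
    (I : Set M)
    (P Q : Finset (Set M))
    (hPprim : ∀ p ∈ P, IsPrimaryIdeal p) (hQprim : ∀ q ∈ Q, IsPrimaryIdeal q)
    (hIP : I = ⋂ p ∈ P, p) (hIQ : I = ⋂ q ∈ Q, q)
    (hPmin : ∀ p ∈ P, ¬ (⋂ q ∈ P.erase p, q) ⊆ p)
    (hQmin : ∀ q ∈ Q, ¬ (⋂ p ∈ Q.erase q, p) ⊆ q) :
    P = Q :=
  (subset_of_biInter_eq_of_isIrredundant hyp hPprim hQprim (hIP ▸ hIQ) hPmin).antisymm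
    (subset_of_biInter_eq_of_isIrredundant hyp hQprim hPprim (hIQ ▸ hIP) hQmin)

open Classical in
/-- In a commutative monoid with zero in which every primary ideal is
strongly irreducible, any two minimal primary decompositions of a proper
ideal coincide as sets. -/
theorem minimal_primary_decomposition_unique {M : Type*} [CommMonoidWithZero M]
    (hyp : ∀ P : Set M, IsPrimaryIdeal P → StrIrredCond P)
    (I : Set M) (hI : IsIdeal I) (hproper : I ≠ Set.univ)
    (P Q : Finset (Set M)) (hPne : P.Nonempty) (hQne : Q.Nonempty)
    (hPprim : ∀ p ∈ P, IsPrimaryIdeal p) (hQprim : ∀ q ∈ Q, IsPrimaryIdeal q)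
    (hIP : I = ⋂ p ∈ P, p) (hIQ : I = ⋂ q ∈ Q, q)
    (hPmin : ∀ p ∈ P, ¬ (⋂ q ∈ P.erase p, q) ⊆ p)
    (hQmin : ∀ q ∈ Q, ¬ (⋂ p ∈ Q.erase q, p) ⊆ q) :
    P = Q :=
  minimal_primary_decomposition_unique_general hyp I P Q hPprim hQprim hIP hIQ hPmin hQmin
end
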